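/- The map f ↦ ‖f‖_{□^V} is a seminorm on the space of bounded measurable functions on X: for all bounded measurable f, g : X → ℝ and every c ∈ ℝ, ‖c·f‖_{□^V} = |c|·‖f‖_{□^V} and ‖f + g‖_{□^V} ≤ ‖f‖_{□^V} + ‖g‖_{□^V}. -/

import Mathlib

open MeasureTheory

/-- The Gowers box integral `∫_{X⁺} ∏_{ω ∈ {0,1}^V} f(x^ω) dμ⁺`. -/
noncomputable def boxInt {V : Type} [Fintype V] [DecidableEq V]
    (X : V → Type) [∀ v, MeasurableSpace (X v)] (μ : ∀ v, Measure (X v))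
    (f : (∀ v, X v) → ℝ) : ℝ :=
  ∫ x : ∀ p : V × Bool, X p.1,
    ∏ ω : V → Bool, f (fun v => x (v, ω v))
    ∂(Measure.pi fun p : V × Bool => μ p.1)

/-- The Gowers box seminorm `‖f‖_{□^V} = (boxInt f)^{1/2^{|V|}}`. -/
noncomputable def boxNorm {V : Type} [Fintype V] [DecidableEq V]
    (X : V → Type) [∀ v, MeasurableSpace (X v)] (μ : ∀ v, Measure (X v))
    (f : (∀ v, X v) → ℝ) : ℝ :=
  (boxInt X μ f) ^ ((1 : ℝ) / 2 ^ Fintype.card V)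

/-!
Write `boxInner h = ∫ ∏_ω h_ω(x^ω) dμ⁺` for the Gowers inner product of a family
`h : {0,1}^V → (X → ℝ)`, so that `boxInt f` is the inner product of the constant family `f`.
Integrating out the two coordinates `(v, 0)` and `(v, 1)` of `x` factorises the integrand, and
gives `boxInner h = ∫ F₀ F₁`, where `F_b` only involves the `h_ω` with `ω v = b`.
Cauchy–Schwarz bounds `(boxInner h)²` by the inner products of the two families obtained by
making `h` constant in the direction `v`, and these are integrals of squares: in particular
`boxInt f ≥ 0`. Doing this for every `v ∈ V` in turn yields the Gowers–Cauchy–Schwarz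
inequality `|boxInner h| ≤ ∏_ω ‖h_ω‖_{□^V}`.

Homogeneity holds because `2^|V|` is even. For the triangle inequality, expand
`∏_ω (f + g)(x^ω)` into the `2^(2^|V|)` products choosing `f` or `g` at each `ω`, bound each
resulting inner product by Gowers–Cauchy–Schwarz, and resum: the total is
`(‖f‖_{□^V} + ‖g‖_{□^V})^(2^|V|)`.
-/

open Function

theorem abs_prod_le_pow_card {ι : Type*} (s : Finset ι) {f : ι → ℝ} {C : ℝ}
    (h : ∀ i ∈ s, |f i| ≤ C) : |∏ i ∈ s, f i| ≤ C ^ s.card :=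
  calc |∏ i ∈ s, f i| = ∏ i ∈ s, |f i| := Finset.abs_prod _ _
    _ ≤ ∏ _i ∈ s, C := Finset.prod_le_prod (fun _ _ => abs_nonneg _) h
    _ = C ^ s.card := Finset.prod_const _

theorem Fintype.prod_update_false_mul_prod_update_true {ι M : Type*} [Fintype ι] [DecidableEq ι]
    [CommMonoid M] (G : (ι → Bool) → M) (a : ι) :
    (∏ τ, G (update τ a false)) * ∏ τ, G (update τ a true) = (∏ τ, G τ) ^ 2 := by
  have hflip : Involutive fun τ : ι → Bool => update τ a (!τ a) := fun τ => by simp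
  rw [sq, ← Finset.prod_mul_distrib]
  nth_rewrite 2 [← Equiv.prod_comp (hflip.toPerm _) G]
  rw [← Finset.prod_mul_distrib]
  refine Finset.prod_congr rfl fun τ _ => ?_
  cases hτ : τ a <;> simp only [Involutive.coe_toPerm, hτ, Bool.not_false, Bool.not_true]
  · rw [← hτ, update_eq_self]
  · rw [← hτ, update_eq_self, mul_comm]

theorem Finset.piecewise_update_of_notMem {ι : Type*} [DecidableEq ι] {β : Type*} {S : Finset ι}
    {a : ι} (ha : a ∉ S) (τ ω : ι → β) (b : β) :
    S.piecewise τ (update ω a b) = (insert a S).piecewise (update τ a b) ω := by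
  rw [Finset.piecewise_insert, ← Finset.update_piecewise_of_notMem _ _ _ ha, update_self]
  congr 1
  exact S.piecewise_congr (fun j hj => (update_of_ne (ne_of_mem_of_not_mem hj ha) _ _).symm)
    fun _ _ => rfl

namespace MeasureTheory

theorem sq_integral_mul_le_integral_sq_mul_integral_sq {α : Type*} [MeasurableSpace α]
    {ν : Measure α} {F G : α → ℝ} (hF : MemLp F 2 ν) (hG : MemLp G 2 ν) :
    (∫ a, F a * G a ∂ν) ^ 2 ≤ (∫ a, F a ^ 2 ∂ν) * ∫ a, G a ^ 2 ∂ν := by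
  have hinner : ∀ {F' G' : α → ℝ} (hF' : MemLp F' 2 ν) (hG' : MemLp G' 2 ν),
      inner ℝ (hF'.toLp F') (hG'.toLp G') = ∫ a, F' a * G' a ∂ν := fun hF' hG' => by
    rw [L2.inner_def]
    refine integral_congr_ae ?_
    filter_upwards [hF'.coeFn_toLp, hG'.coeFn_toLp] with a hFa hGa
    simp [hFa, hGa, mul_comm]
  simpa only [hinner, ← sq] using real_inner_mul_inner_self_le (hF.toLp F) (hG.toLp G)

section Update

variable {ι : Type*} [Fintype ι] [DecidableEq ι] {Z : ι → Type*}
  [∀ i, MeasurableSpace (Z i)] (ν : ∀ i, Measure (Z i)) [∀ i, SigmaFinite (ν i)] (i : ι)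
  [IsProbabilityMeasure (ν i)]

theorem measurePreserving_update :
    MeasurePreserving (fun p : (∀ j, Z j) × Z i => update p.1 i p.2)
      ((Measure.pi ν).prod (ν i)) (Measure.pi ν) where
  measurable := measurable_update'
  map_eq := by
    refine (Measure.pi_eq fun s hs => ?_).symm
    have hpre : (fun p : (∀ j, Z j) × Z i => update p.1 i p.2) ⁻¹' Set.univ.pi s
        = Set.univ.pi (update s i Set.univ) ×ˢ s i := by
      ext p
      simp only [Set.mem_preimage, Set.mem_pi, Set.mem_univ, true_implies, Set.mem_prod]
      constructor
      · intro h
        refine ⟨fun j => ?_, by simpa using h i⟩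
        rcases eq_or_ne j i with rfl | hj
        · simp
        · simpa [hj] using h j
      · rintro ⟨h, hi⟩ j
        rcases eq_or_ne j i with rfl | hj
        · simpa using hi
        · simpa [hj] using h j
    have hupd : (fun j => ν j (update s i Set.univ j))
        = update (fun j => ν j (s j)) i 1 := by
      ext1 j
      rcases eq_or_ne j i with rfl | hj
      · simp
      · simp [hj]
    rw [Measure.map_apply measurable_update' (MeasurableSet.univ_pi hs), hpre,
      Measure.prod_prod, Measure.pi_pi, hupd, Finset.prod_update_of_mem (Finset.mem_univ i),
      one_mul, ← Finset.prod_erase_mul _ _ (Finset.mem_univ i), Finset.sdiff_singleton_eq_erase]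

variable {ν i} {F : (∀ j, Z j) → ℝ}

theorem integral_eq_integral_integral_update (hF : Integrable F (Measure.pi ν)) :
    ∫ x, F x ∂Measure.pi ν = ∫ x, ∫ a, F (update x i a) ∂ν i ∂Measure.pi ν := by
  have hmp := measurePreserving_update ν i
  calc ∫ x, F x ∂Measure.pi ν
      = ∫ p, F (update p.1 i p.2) ∂(Measure.pi ν).prod (ν i) := by
        rw [← integral_map hmp.measurable.aemeasurable (by rw [hmp.map_eq]; exact hF.1),
          hmp.map_eq]
    _ = _ := integral_prod _ (hmp.integrable_comp_of_integrable hF)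

theorem Integrable.integral_update (hF : Integrable F (Measure.pi ν)) :
    Integrable (fun x => ∫ a, F (update x i a) ∂ν i) (Measure.pi ν) :=
  ((measurePreserving_update ν i).integrable_comp_of_integrable hF).integral_prod_left

end Update

end MeasureTheory

section Box

variable {V : Type}

def vertex {X : V → Type} (x : ∀ p : V × Bool, X p.1) (ω : V → Bool) : ∀ v, X v :=
  fun v => x (v, ω v)

section Vertex

variable [DecidableEq V] {X : V → Type} (x : ∀ p : V × Bool, X p.1) {ω : V → Bool} {v : V}
  {b : Bool} (a : X v)

theorem vertex_update_of_eq (hω : ω v = b) :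
    vertex (update x (v, b) a) ω = update (vertex x ω) v a := by
  funext w
  rcases eq_or_ne w v with rfl | hw
  · subst hω; simp [vertex]
  · simp [vertex, hw]

theorem vertex_update_of_ne (hω : ω v ≠ b) :
    vertex (update x (v, b) a) ω = vertex x ω := by
  funext w
  rcases eq_or_ne w v with rfl | hw
  · simp [vertex, hω]
  · simp [vertex, hw]

theorem update_vertex_update (ω : V → Bool) (c : Bool) :
    update (vertex x (update ω v c)) v a = update (vertex x ω) v a := by
  funext w
  rcases eq_or_ne w v with rfl | hw
  · simp
  · rw [update_of_ne hw, update_of_ne hw]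
    simp only [vertex]
    congr 2
    exact update_of_ne hw c ω

end Vertex

@[fun_prop]
theorem measurable_vertex {X : V → Type} [∀ v, MeasurableSpace (X v)] (ω : V → Bool) :
    Measurable fun x : ∀ p : V × Bool, X p.1 => vertex x ω :=
  measurable_pi_lambda _ fun _ => measurable_pi_apply _

variable [Fintype V] [DecidableEq V] (X : V → Type) [∀ v, MeasurableSpace (X v)]
  (μ : ∀ v, Measure (X v))

noncomputable def boxInner (h : (V → Bool) → (∀ v, X v) → ℝ) : ℝ :=
  ∫ x, ∏ ω, h ω (vertex x ω) ∂(Measure.pi fun p : V × Bool => μ p.1)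

theorem boxInt_eq_boxInner (f : (∀ v, X v) → ℝ) : boxInt X μ f = boxInner X μ fun _ => f :=
  rfl

noncomputable def boxHalf (v : V) (h : (V → Bool) → (∀ v, X v) → ℝ) (b : Bool)
    (x : ∀ p : V × Bool, X p.1) : ℝ :=
  ∫ a, ∏ ω with ω v = b, h ω (update (vertex x ω) v a) ∂μ v

theorem boxHalf_comp_update (v : V) (h : (V → Bool) → (∀ v, X v) → ℝ) (b c : Bool) :
    boxHalf X μ v (fun ω => h (update ω v c)) b = boxHalf X μ v h c := by
  funext x
  refine integral_congr_ae (ae_of_all _ fun a => ?_)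
  refine Finset.prod_nbij' (fun ω => update ω v c) (fun ω => update ω v b)
    (by simp) (by simp) ?_ ?_ fun ω _ => by rw [update_vertex_update]
  all_goals
    intro ω hω
    rw [Finset.mem_filter] at hω
    simp [← hω.2]

theorem boxNorm_nonneg {f : (∀ v, X v) → ℝ} (hf : 0 ≤ boxInt X μ f) :
    0 ≤ boxNorm X μ f :=
  Real.rpow_nonneg hf _

theorem boxNorm_pow {f : (∀ v, X v) → ℝ} (hf : 0 ≤ boxInt X μ f) :
    boxNorm X μ f ^ 2 ^ Fintype.card V = boxInt X μ f := by
  have hcast : (2 : ℝ) ^ Fintype.card V = ((2 ^ Fintype.card V : ℕ) : ℝ) := by push_cast; rfl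
  rw [boxNorm, hcast, one_div]
  exact Real.rpow_inv_natCast_pow hf (by positivity)

theorem boxInt_const_mul (c : ℝ) (f : (∀ v, X v) → ℝ) :
    boxInt X μ (fun x => c * f x) = c ^ 2 ^ Fintype.card V * boxInt X μ f := by
  simp only [boxInt, Finset.prod_mul_distrib, Finset.prod_const, Finset.card_univ,
    Fintype.card_fun, Fintype.card_bool, integral_const_mul]

variable [∀ v, IsProbabilityMeasure (μ v)] {h : (V → Bool) → (∀ v, X v) → ℝ} {C : ℝ}

theorem integrable_prod_vertex (hm : ∀ ω, Measurable (h ω)) (hb : ∀ ω x, |h ω x| ≤ C) :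
    Integrable (fun x => ∏ ω, h ω (vertex x ω)) (Measure.pi fun p : V × Bool => μ p.1) :=
  Integrable.of_bound
    (Finset.measurable_prod _ fun ω _ => (hm ω).comp (measurable_vertex ω)).aestronglyMeasurable
    (C ^ Fintype.card (V → Bool))
    (ae_of_all _ fun _ => abs_prod_le_pow_card _ fun ω _ => hb ω _)

theorem memLp_boxHalf (v : V) (hm : ∀ ω, Measurable (h ω)) (hb : ∀ ω x, |h ω x| ≤ C)
    (b : Bool) :
    MemLp (boxHalf X μ v h b) 2 (Measure.pi fun p : V × Bool => μ p.1) := by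
  refine MemLp.of_bound (StronglyMeasurable.integral_prod_right ?_).aestronglyMeasurable
    (C ^ (Finset.univ.filter fun ω : V → Bool => ω v = b).card) (ae_of_all _ fun x => ?_)
  · exact Measurable.stronglyMeasurable (by fun_prop)
  · simpa [boxHalf] using norm_integral_le_of_norm_le_const (μ := μ v)
      (f := fun a => ∏ ω with ω v = b, h ω (update (vertex x ω) v a))
      (ae_of_all _ fun a => abs_prod_le_pow_card _ fun ω _ => hb ω _)

theorem boxInner_eq_integral_boxHalf_mul (v : V) (hm : ∀ ω, Measurable (h ω))
    (hb : ∀ ω x, |h ω x| ≤ C) :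
    boxInner X μ h = ∫ x, boxHalf X μ v h false x * boxHalf X μ v h true x
      ∂(Measure.pi fun p : V × Bool => μ p.1) := by
  have hP := integrable_prod_vertex X μ hm hb
  have hsplit : ∀ x s t,
      ∏ ω, h ω (vertex (update (update x (v, false) s) (v, true) t) ω) =
        (∏ ω with ω v = false, h ω (update (vertex x ω) v s)) *
          ∏ ω with ω v = true, h ω (update (vertex x ω) v t) := by
    intro x s t
    rw [← Finset.prod_fiberwise Finset.univ (fun ω => ω v), Fintype.prod_bool, mul_comm]
    congr 1 <;> refine Finset.prod_congr rfl fun ω hω => ?_ <;> rw [Finset.mem_filter] at hω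
    · rw [vertex_update_of_ne _ _ (by simp [hω.2]), vertex_update_of_eq _ _ hω.2]
    · rw [vertex_update_of_eq _ _ hω.2, vertex_update_of_ne _ _ (by simp [hω.2])]
  rw [boxInner, integral_eq_integral_integral_update (i := (v, true)) hP,
    integral_eq_integral_integral_update (i := (v, false)) hP.integral_update]
  simp only [hsplit, integral_const_mul, integral_mul_const, boxHalf]

theorem boxInner_comp_update_eq_integral_sq (v : V) (hm : ∀ ω, Measurable (h ω))
    (hb : ∀ ω x, |h ω x| ≤ C) (c : Bool) :
    boxInner X μ (fun ω => h (update ω v c)) =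
      ∫ x, boxHalf X μ v h c x ^ 2 ∂(Measure.pi fun p : V × Bool => μ p.1) := by
  simp only [boxInner_eq_integral_boxHalf_mul X μ v (fun _ => hm _) (fun _ => hb _),
    boxHalf_comp_update, sq]

theorem boxInner_comp_update_nonneg (v : V) (hm : ∀ ω, Measurable (h ω))
    (hb : ∀ ω x, |h ω x| ≤ C) (c : Bool) :
    0 ≤ boxInner X μ (fun ω => h (update ω v c)) := by
  rw [boxInner_comp_update_eq_integral_sq X μ v hm hb]
  positivity

theorem sq_boxInner_le (v : V) (hm : ∀ ω, Measurable (h ω)) (hb : ∀ ω x, |h ω x| ≤ C) :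
    boxInner X μ h ^ 2 ≤ boxInner X μ (fun ω => h (update ω v false)) *
      boxInner X μ (fun ω => h (update ω v true)) := by
  rw [boxInner_comp_update_eq_integral_sq X μ v hm hb,
    boxInner_comp_update_eq_integral_sq X μ v hm hb, boxInner_eq_integral_boxHalf_mul X μ v hm hb]
  exact sq_integral_mul_le_integral_sq_mul_integral_sq (memLp_boxHalf X μ v hm hb false)
    (memLp_boxHalf X μ v hm hb true)

theorem boxInt_nonneg [Nonempty V] {f : (∀ v, X v) → ℝ} (hm : Measurable f)
    (hb : ∀ x, |f x| ≤ C) : 0 ≤ boxInt X μ f :=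
  boxInner_comp_update_nonneg X μ (h := fun _ => f) (Classical.arbitrary V) (fun _ => hm)
    (fun _ => hb) false

/-- The product runs over all `τ : V → Bool` although only `τ` restricted to `S` matters: each
factor is repeated `2^(|V| - |S|)` times, which keeps the exponent on the left independent
of `S`. -/
theorem pow_abs_boxInner_le_prod (hm : ∀ ω, Measurable (h ω)) (hb : ∀ ω x, |h ω x| ≤ C)
    (S : Finset V) : |boxInner X μ h| ^ Fintype.card (V → Bool) ≤
      ∏ τ, |boxInner X μ fun ω => h (S.piecewise τ ω)| := by
  induction S using Finset.induction_on with
  | empty => simp [Finset.prod_const]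
  | @insert a S ha IH =>
    refine IH.trans ((pow_le_pow_iff_left₀ (by positivity) (by positivity) two_ne_zero).1 ?_)
    calc (∏ τ, |boxInner X μ fun ω => h (S.piecewise τ ω)|) ^ 2
        = ∏ τ, (boxInner X μ fun ω => h (S.piecewise τ ω)) ^ 2 := by
          simp only [← Finset.prod_pow, sq_abs]
      _ ≤ ∏ τ, |boxInner X μ fun ω => h ((insert a S).piecewise (update τ a false) ω)| *
            |boxInner X μ fun ω => h ((insert a S).piecewise (update τ a true) ω)| := by
          refine Finset.prod_le_prod (fun _ _ => sq_nonneg _) fun τ _ => ?_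
          rw [← abs_mul]
          refine le_trans ?_ (le_abs_self _)
          simpa only [Finset.piecewise_update_of_notMem ha] using
            sq_boxInner_le X μ a (h := fun ω => h (S.piecewise τ ω)) (fun _ => hm _)
              (fun _ => hb _)
      _ = _ := by
          rw [Finset.prod_mul_distrib]
          exact Fintype.prod_update_false_mul_prod_update_true
            (fun τ => |boxInner X μ fun ω => h ((insert a S).piecewise τ ω)|) a

theorem abs_boxInner_le_prod_boxNorm [Nonempty V] (hm : ∀ ω, Measurable (h ω))
    (hb : ∀ ω x, |h ω x| ≤ C) : |boxInner X μ h| ≤ ∏ ω, boxNorm X μ (h ω) := by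
  have hI : ∀ ω, 0 ≤ boxInt X μ (h ω) := fun ω => boxInt_nonneg X μ (hm ω) (hb ω)
  refine (pow_le_pow_iff_left₀ (abs_nonneg _) (Finset.prod_nonneg fun ω _ =>
    boxNorm_nonneg X μ (hI ω)) (pow_ne_zero (Fintype.card V) two_ne_zero)).1 ?_
  calc |boxInner X μ h| ^ 2 ^ Fintype.card V ≤ ∏ ω, |boxInt X μ (h ω)| := by
        simpa [boxInt_eq_boxInner] using pow_abs_boxInner_le_prod X μ hm hb Finset.univ
    _ = (∏ ω, boxNorm X μ (h ω)) ^ 2 ^ Fintype.card V := by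
        simp only [← Finset.prod_pow, boxNorm_pow X μ (hI _), abs_of_nonneg (hI _)]

theorem boxInt_add {f g : (∀ v, X v) → ℝ} (hfm : Measurable f) (hfb : ∀ x, |f x| ≤ C)
    (hgm : Measurable g) (hgb : ∀ x, |g x| ≤ C) :
    boxInt X μ (fun x => f x + g x) = ∑ σ : (V → Bool) → Bool,
      boxInner X μ fun ω => cond (σ ω) f g := by
  have hexpand : ∀ x : ∀ p : V × Bool, X p.1, ∏ ω, (f (vertex x ω) + g (vertex x ω)) =
      ∑ σ : (V → Bool) → Bool, ∏ ω, cond (σ ω) f g (vertex x ω) := fun x => by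
    rw [← Fintype.prod_sum fun ω b => cond b f g (vertex x ω)]
    simp
  refine (integral_congr_ae (ae_of_all _ hexpand)).trans (integral_finsetSum _ fun σ _ => ?_)
  refine integrable_prod_vertex X μ (C := C) (fun ω => ?_) fun ω => ?_ <;> cases σ ω
  exacts [hgm, hfm, hgb, hfb]

theorem boxNorm_add_le [Nonempty V] {f g : (∀ v, X v) → ℝ} (hfm : Measurable f)
    (hfb : ∀ x, |f x| ≤ C) (hgm : Measurable g) (hgb : ∀ x, |g x| ≤ C) :
    boxNorm X μ (fun x => f x + g x) ≤ boxNorm X μ f + boxNorm X μ g := by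
  have hfg : ∀ b : Bool, Measurable (cond b f g) ∧ ∀ x, |cond b f g x| ≤ C := by
    rintro (_ | _)
    exacts [⟨hgm, hgb⟩, ⟨hfm, hfb⟩]
  have hI : 0 ≤ boxInt X μ (fun x => f x + g x) :=
    boxInt_nonneg X μ (hfm.add hgm) fun x => (abs_add_le _ _).trans (add_le_add (hfb x) (hgb x))
  refine (pow_le_pow_iff_left₀ (boxNorm_nonneg X μ hI)
    (add_nonneg (boxNorm_nonneg X μ (boxInt_nonneg X μ hfm hfb))
      (boxNorm_nonneg X μ (boxInt_nonneg X μ hgm hgb)))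
    (pow_ne_zero (Fintype.card V) two_ne_zero)).1 ?_
  calc boxNorm X μ (fun x => f x + g x) ^ 2 ^ Fintype.card V
      = ∑ σ : (V → Bool) → Bool, boxInner X μ fun ω => cond (σ ω) f g := by
        rw [boxNorm_pow X μ hI, boxInt_add X μ hfm hfb hgm hgb]
    _ ≤ ∑ σ : (V → Bool) → Bool, ∏ ω, boxNorm X μ (cond (σ ω) f g) :=
        Finset.sum_le_sum fun σ _ => (le_abs_self _).trans
          (abs_boxInner_le_prod_boxNorm X μ (fun _ => (hfg _).1) fun _ => (hfg _).2)
    _ = ∏ _ω : V → Bool, ∑ b : Bool, boxNorm X μ (cond b f g) :=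
        (Fintype.prod_sum fun _ b => boxNorm X μ (cond b f g)).symm
    _ = (boxNorm X μ f + boxNorm X μ g) ^ 2 ^ Fintype.card V := by
        simp only [Fintype.sum_bool, cond_true, cond_false, Finset.prod_const, Finset.card_univ,
          Fintype.card_fun, Fintype.card_bool]

theorem boxNorm_const_mul [Nonempty V] {f : (∀ v, X v) → ℝ} (hm : Measurable f)
    (hb : ∀ x, |f x| ≤ C) (c : ℝ) :
    boxNorm X μ (fun x => c * f x) = |c| * boxNorm X μ f := by
  have hI := boxInt_nonneg X μ hm hb
  have hcI : 0 ≤ boxInt X μ (fun x => c * f x) := by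
    rw [boxInt_const_mul]
    exact mul_nonneg ((Nat.even_pow.2 ⟨even_two, Fintype.card_ne_zero⟩).pow_nonneg c) hI
  refine (pow_left_inj₀ (boxNorm_nonneg X μ hcI) (mul_nonneg (abs_nonneg c)
    (boxNorm_nonneg X μ hI)) (pow_ne_zero (Fintype.card V) two_ne_zero)).1 ?_
  rw [mul_pow, boxNorm_pow X μ hcI, boxNorm_pow X μ hI, boxInt_const_mul,
    (Nat.even_pow.2 ⟨even_two, Fintype.card_ne_zero⟩).pow_abs]

end Box

/-- `‖·‖_{□^V}` is a seminorm on bounded measurable functions: absolute homogeneity and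
the triangle inequality. -/
theorem boxNorm_seminorm (V : Type) [Fintype V] [DecidableEq V] [Nonempty V]
    (X : V → Type) [∀ v, MeasurableSpace (X v)]
    (μ : ∀ v, Measure (X v)) [∀ v, IsProbabilityMeasure (μ v)]
    (f g : (∀ v, X v) → ℝ)
    (hfb : ∃ C, ∀ x, |f x| ≤ C) (hfm : Measurable f)
    (hgb : ∃ C, ∀ x, |g x| ≤ C) (hgm : Measurable g) (c : ℝ) :
    boxNorm X μ (fun x => c * f x) = |c| * boxNorm X μ f ∧
    boxNorm X μ (fun x => f x + g x) ≤ boxNorm X μ f + boxNorm X μ g := by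
  obtain ⟨Cf, hCf⟩ := hfb
  obtain ⟨Cg, hCg⟩ := hgb
  exact ⟨boxNorm_const_mul X μ hfm hCf c,
    boxNorm_add_le X μ hfm (fun x => (hCf x).trans (le_max_left Cf Cg)) hgm
      fun x => (hCg x).trans (le_max_right Cf Cg)⟩
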